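/- arXiv:2010.13781 — 2 statements merged into one kernel-verified Lean document; each statement's English description precedes it below -/
import Mathlib

section
/- Let S be a nonempty finite set of prime numbers and let k ≥ 1 be a natural number. Define the degree of a natural number d ≥ 1 to be the maximum exponent appearing in its prime factorization (degree 0 for d = 1). Let D_k be the (finite) set of natural numbers d all of whose prime factors lie in S and whose degree equals k; equivalently, D_k is the set of divisors d of (∏_{p ∈ S} p)^k whose maximal prime-power exponent is exactly k. Then ∑_{d ∈ D_k} λ(d) = (-1)^k. -/
/-!
Since `λ` is completely multiplicative, `∑_{d ∣ (∏_{p ∈ S} p)^m} λ(d)` factors as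
`∏_{p ∈ S} ∑_{j ≤ m} (-1)^j`, which is `1` for even `m` and `0` for odd `m` (as `S ≠ ∅`).
A divisor of `(∏_{p ∈ S} p)^k` has degree `k` exactly when it does not divide
`(∏_{p ∈ S} p)^(k-1)`, so the sum in question is the difference of two such sums,
namely `(-1)^k`.
-/

open ArithmeticFunction Finset

/-- The Liouville function `λ(n) = (-1)^Ω(n)`, where `Ω(n)` is the number of
prime factors of `n` counted with multiplicity. -/
def liouville (n : ℕ) : ℤ := (-1) ^ (ArithmeticFunction.cardFactors n)

/-- The "degree" of a natural number: the maximum exponent appearing in its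
prime factorization (with degree 0 for `d = 1`). -/
def degree (d : ℕ) : ℕ := d.factorization.support.sup d.factorization

lemma squarefree_prod_of_prime {S : Finset ℕ} (hS : ∀ p ∈ S, p.Prime) :
    Squarefree (∏ p ∈ S, p) :=
  Finset.squarefree_prod_of_pairwise_isCoprime
    (fun p hp q hq hpq => Nat.coprime_iff_isRelPrime.mp
      ((Nat.coprime_primes (hS p hp) (hS q hq)).mpr hpq))
    fun p hp => (hS p hp).squarefree

lemma degree_le_iff_forall_factorization_le {d m : ℕ} :
    degree d ≤ m ↔ ∀ p, d.factorization p ≤ m := by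
  refine ⟨fun h p => ?_, fun h => Finset.sup_le fun p _ => h p⟩
  by_cases hp : p ∈ d.factorization.support
  · exact (Finset.le_sup hp).trans h
  · simp [Finsupp.notMem_support_iff.mp hp]

lemma dvd_pow_iff_degree_le_of_squarefree {P d n m : ℕ} (hP : Squarefree P)
    (hd : d ∣ P ^ n) : d ∣ P ^ m ↔ degree d ≤ m := by
  have hd0 : d ≠ 0 := ne_zero_of_dvd_ne_zero (pow_ne_zero n hP.ne_zero) hd
  rw [degree_le_iff_forall_factorization_le,
    ← Nat.factorization_le_iff_dvd hd0 (pow_ne_zero m hP.ne_zero), Finsupp.le_def]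
  rw [← Nat.factorization_le_iff_dvd hd0 (pow_ne_zero n hP.ne_zero), Finsupp.le_def] at hd
  refine forall_congr' fun p => ?_
  have hdp := hd p
  simp only [Nat.factorization_pow, Finsupp.smul_apply, smul_eq_mul] at hdp ⊢
  rcases Nat.le_one_iff_eq_zero_or_eq_one.mp (hP.natFactorization_le_one p) with h | h <;>
    simp_all

lemma filter_divisors_pow_degree_eq_of_squarefree {P k : ℕ} (hP : Squarefree P) (hk : 1 ≤ k) :
    (P ^ k).divisors.filter (fun d => degree d = k) =
      (P ^ k).divisors \ (P ^ (k - 1)).divisors := by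
  ext d
  simp only [mem_filter, mem_sdiff, Nat.mem_divisors, pow_ne_zero _ hP.ne_zero, ne_eq,
    not_false_eq_true, and_true, and_congr_right_iff]
  intro hd
  have hle := (dvd_pow_iff_degree_le_of_squarefree hP hd).mp hd
  rw [dvd_pow_iff_degree_le_of_squarefree hP hd]
  omega

lemma sum_divisors_prime_pow_liouville {p : ℕ} (hp : p.Prime) (m : ℕ) :
    ∑ d ∈ (p ^ m).divisors, ArithmeticFunction.liouville d = if Even m then 1 else 0 := by
  rw [Nat.sum_divisors_prime_pow hp]
  simp_rw [liouville_apply (pow_ne_zero _ hp.ne_zero), cardFactors_apply_prime_pow hp]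
  by_cases hm : Even m <;> simp [neg_one_geom_sum, Nat.even_add_one, hm]

open scoped ArithmeticFunction.zeta in
lemma sum_divisors_prod_pow_liouville {S : Finset ℕ} (hS : ∀ p ∈ S, p.Prime) (m : ℕ) :
    ∑ d ∈ ((∏ p ∈ S, p) ^ m).divisors, _root_.liouville d =
      (if Even m then 1 else 0) ^ S.card := by
  have hmul : ((ζ : ArithmeticFunction ℤ) * ArithmeticFunction.liouville).IsMultiplicative :=
    isMultiplicative_zeta.natCast.mul isMultiplicative_liouville
  calc ∑ d ∈ ((∏ p ∈ S, p) ^ m).divisors, _root_.liouville d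
      = ((ζ : ArithmeticFunction ℤ) * ArithmeticFunction.liouville) (∏ p ∈ S, p ^ m) := by
        rw [coe_zeta_mul_apply, prod_pow]
        exact sum_congr rfl fun d hd => (liouville_apply (Nat.pos_of_mem_divisors hd).ne').symm
    _ = ∏ p ∈ S, ((ζ : ArithmeticFunction ℤ) * ArithmeticFunction.liouville) (p ^ m) :=
        hmul.map_prod _ S fun p hp q hq hpq =>
          ((Nat.coprime_primes (hS p hp) (hS q hq)).mpr hpq).pow m m
    _ = (if Even m then 1 else 0) ^ S.card := by
        rw [prod_eq_pow_card fun p hp => by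
          rw [coe_zeta_mul_apply, sum_divisors_prime_pow_liouville (hS p hp)]]

theorem liouville_sum_over_degree_k_numbers
    (S : Finset ℕ) (hS : S.Nonempty) (hprime : ∀ p ∈ S, p.Prime)
    (k : ℕ) (hk : 1 ≤ k) :
    ∑ d ∈ ((∏ p ∈ S, p) ^ k).divisors.filter (fun d => degree d = k),
      _root_.liouville d = (-1) ^ k := by
  have hP := squarefree_prod_of_prime hprime
  rw [filter_divisors_pow_degree_eq_of_squarefree hP hk,
    sum_sdiff_eq_sub (Nat.divisors_subset_of_dvd (pow_ne_zero k hP.ne_zero)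
      (pow_dvd_pow _ (Nat.sub_le k 1))),
    sum_divisors_prod_pow_liouville hprime, sum_divisors_prod_pow_liouville hprime]
  obtain ⟨j, rfl⟩ : ∃ j, k = j + 1 := ⟨k - 1, by omega⟩
  rcases Nat.even_or_odd j with hj | hj <;>
    simp [hj, hj.neg_one_pow, pow_succ, zero_pow hS.card_pos.ne',
      Nat.not_even_iff_odd.mpr]
end

section
/- (Legendre's formula with the Spencer-Brown rectification.) Let n ≥ 2 be a natural number and let P = ∏_{p prime, p² ≤ n} p be the product of all primes p ≤ √n. Then, as an identity of integers, π(n) = π(⌊√n⌋) + (n-1) + ∑_{d ∣ P, d ≥ 2} μ(d)·⌊n/d⌋, where the sum is over the divisors d of P with d ≥ 2. -/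
/-!
Legendre's sieve identity `∑_{d ∣ P} μ(d) ⌊n/d⌋ = #{1 ≤ m ≤ n : gcd(P, m) = 1}` holds for every
`P ≠ 0`. When `P` is the product of the primes `p ≤ √n`, an integer `1 ≤ m ≤ n` is coprime to `P`
exactly when `m = 1` or `m` is a prime in `(√n, n]`, because a composite `m ≤ n` has a prime
factor `≤ √m ≤ √n`. Hence the sieve sum is `1 + π(n) - π(√n)`, and its term `d = 1` is `n`.
-/

open ArithmeticFunction Finset

open scoped ArithmeticFunction.Moebius Nat.Prime

namespace ArithmeticFunction

theorem sum_divisors_moebius (k : ℕ) : ∑ d ∈ k.divisors, (μ d : ℤ) = if k = 1 then 1 else 0 := by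
  simpa only [coe_mul_zeta_apply, one_apply] using congr($moebius_mul_coe_zeta k)

theorem sum_divisors_moebius_mul_div {P : ℕ} (hP : P ≠ 0) (n : ℕ) :
    ∑ d ∈ P.divisors, (μ d : ℤ) * (n / d : ℕ) = #{m ∈ Ioc 0 n | P.Coprime m} := by
  calc ∑ d ∈ P.divisors, (μ d : ℤ) * (n / d : ℕ)
      = ∑ d ∈ P.divisors, ∑ m ∈ Ioc 0 n, if d ∣ m then (μ d : ℤ) else 0 := by
        refine sum_congr rfl fun d _ => ?_
        rw [← Nat.Ioc_filter_dvd_card_eq_div, ← sum_filter, sum_const, nsmul_eq_mul, mul_comm]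
    _ = ∑ m ∈ Ioc 0 n, ∑ d ∈ (P.gcd m).divisors, (μ d : ℤ) := by
        rw [sum_comm]
        refine sum_congr rfl fun m _ => ?_
        rw [← sum_filter, ← Nat.divisors_filter_dvd_of_dvd hP (P.gcd_dvd_left m)]
        refine sum_congr (filter_congr fun d hd => ?_) fun _ _ => rfl
        rw [Nat.dvd_gcd_iff, and_iff_right (Nat.dvd_of_mem_divisors hd)]
    _ = #{m ∈ Ioc 0 n | P.Coprime m} := by
        simp only [sum_divisors_moebius, sum_boole, Nat.Coprime]

end ArithmeticFunction

namespace Nat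

theorem prime_of_lt_minFac_sq {m : ℕ} (hm : 0 < m) (h : m < m.minFac ^ 2) : m.Prime := by
  by_contra hnp
  exact (minFac_sq_le_self hm hnp).not_gt h

theorem coprime_primorial_iff {k m : ℕ} (hm : m ≠ 1) : (primorial k).Coprime m ↔ k < m.minFac := by
  rw [← not_le, iff_not_comm, Prime.not_coprime_iff_dvd]
  constructor
  · intro h
    exact ⟨m.minFac, minFac_prime hm, ((minFac_prime hm).dvd_primorial_iff).mpr h, minFac_dvd m⟩
  · rintro ⟨p, hp, hpk, hpm⟩
    exact (minFac_le_of_dvd hp.two_le hpm).trans (hp.dvd_primorial_iff.mp hpk)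

theorem filter_coprime_primorial_Ioc {k n : ℕ} (hn : 0 < n) (hnk : n < (k + 1) ^ 2) :
    {m ∈ Ioc 0 n | (primorial k).Coprime m} = insert 1 {p ∈ Ioc k n | p.Prime} := by
  ext m
  simp only [mem_insert, mem_filter, mem_Ioc]
  rcases eq_or_ne m 1 with rfl | hm1
  · simpa [one_le_iff_ne_zero] using hn.ne'
  rw [coprime_primorial_iff hm1]
  constructor
  · rintro ⟨⟨hm0, hmn⟩, hkm⟩
    have hsq : m < m.minFac ^ 2 := hmn.trans_lt (hnk.trans_le (Nat.pow_le_pow_left hkm 2))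
    have hmp := prime_of_lt_minFac_sq hm0 hsq
    rw [hmp.minFac_eq] at hkm
    exact Or.inr ⟨⟨hkm, hmn⟩, hmp⟩
  · rintro (rfl | ⟨⟨hkm, hmn⟩, hmp⟩)
    · exact absurd rfl hm1
    · exact ⟨⟨hmp.pos, hmn⟩, by rwa [hmp.minFac_eq]⟩

theorem primeCounting_add_card_filter_prime_Ioc {k n : ℕ} (h : k ≤ n) :
    π k + #{p ∈ Ioc k n | p.Prime} = π n := by
  rw [← primesLE_card_eq_primeCounting, ← primesLE_card_eq_primeCounting, ← card_union_of_disjoint]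
  · congr 1
    ext p
    simp only [mem_union, mem_primesLE, mem_filter, mem_Ioc]
    constructor
    · rintro (⟨hpk, hp⟩ | ⟨⟨-, hpn⟩, hp⟩)
      · exact ⟨hpk.trans h, hp⟩
      · exact ⟨hpn, hp⟩
    · rintro ⟨hpn, hp⟩
      rcases le_or_gt p k with hpk | hkp
      · exact Or.inl ⟨hpk, hp⟩
      · exact Or.inr ⟨⟨hkp, hpn⟩, hp⟩
  · rw [disjoint_left]
    intro p hpk hpn
    exact (mem_primesLE.mp hpk).1.not_gt (mem_Ioc.mp (mem_filter.mp hpn).1).1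

theorem card_filter_coprime_primorial_sqrt {n : ℕ} (hn : 0 < n) :
    #{m ∈ Ioc 0 n | (primorial (sqrt n)).Coprime m} + π (sqrt n) = π n + 1 := by
  rw [filter_coprime_primorial_Ioc hn (lt_succ_sqrt' n),
    card_insert_of_notMem (by simp [not_prime_one]), ← primeCounting_add_card_filter_prime_Ioc (sqrt_le_self n)]
  ring

theorem filter_prime_sq_le_eq_primesLE_sqrt (n : ℕ) :
    {p ∈ range (n + 1) | p.Prime ∧ p ^ 2 ≤ n} = primesLE (sqrt n) := by
  ext p
  simp only [mem_filter, mem_range, mem_primesLE, ← le_sqrt']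
  constructor
  · rintro ⟨-, hp, hpn⟩
    exact ⟨hpn, hp⟩
  · rintro ⟨hpn, hp⟩
    exact ⟨lt_succ_of_le (hpn.trans (sqrt_le_self n)), hp, hpn⟩

theorem sum_divisors_eq_add_sum_filter_two_le {M : Type*} [AddCommMonoid M] {P : ℕ} (hP : P ≠ 0)
    (f : ℕ → M) : ∑ d ∈ P.divisors, f d = f 1 + ∑ d ∈ P.divisors with 2 ≤ d, f d := by
  rw [← sum_filter_not_add_sum_filter _ (fun d => 2 ≤ d)]
  congr 1
  have hsmall : {d ∈ P.divisors | ¬2 ≤ d} = {1} := by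
    ext d
    simp only [mem_filter, Nat.mem_divisors, mem_singleton, not_le]
    constructor
    · rintro ⟨⟨hd, -⟩, hd2⟩
      have hd0 : d ≠ 0 := by rintro rfl; exact hP (zero_dvd_iff.mp hd)
      omega
    · rintro rfl
      exact ⟨⟨one_dvd P, hP⟩, one_lt_two⟩
  rw [hsmall, sum_singleton]

end Nat

theorem legendre_formula_spencerBrown_rectified (n : ℕ) (hn : 2 ≤ n) :
    (Nat.primeCounting n : ℤ) =
      (Nat.primeCounting (Nat.sqrt n) : ℤ) + ((n : ℤ) - 1) +
        ∑ d ∈ (∏ p ∈ (Finset.range (n + 1)).filter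
              (fun p => p.Prime ∧ p ^ 2 ≤ n), p).divisors.filter (fun d => 2 ≤ d),
          (ArithmeticFunction.moebius d : ℤ) * (n / d : ℕ) := by
  rw [Nat.filter_prime_sq_le_eq_primesLE_sqrt, ← primorial_eq_prod_primesLE]
  have hsieve := sum_divisors_moebius_mul_div (primorial_ne_zero (Nat.sqrt n)) n
  rw [Nat.sum_divisors_eq_add_sum_filter_two_le (primorial_ne_zero _), moebius_apply_one,
    Nat.div_one, one_mul] at hsieve
  have hcount := Nat.card_filter_coprime_primorial_sqrt (n := n) (by omega)
  omega
end
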